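/- Let (V, V₁, …, Vₙ) be an (n+1)-tuple of doubly commuting shifts on a complex Hilbert space H, and let W = ker V* = H ⊖ V H with orthogonal projection P_W. Then: (a) W is a reducing subspace for each Vᵢ, i.e., Vᵢ W ⊆ W and Vᵢ* W ⊆ W for i = 1, …, n; and (b) the unitary Γ : H → ℓ²(ℕ, W) defined by (Γ f)(m) = P_W V^{*m} f satisfies Γ V Γ* = S_W (the unilateral shift on ℓ²(ℕ, W)) and, for each i, Γ Vᵢ Γ* acts entrywise by the restriction Vᵢ|_W, i.e., (Γ Vᵢ Γ* g)(m) = Vᵢ(g(m)) for all g ∈ ℓ²(ℕ, W) and m ∈ ℕ. -/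

import Mathlib

noncomputable section

open Filter Topology MeasureTheory ContinuousLinearMap

universe u v

/-- An operator is a *shift* if it is an isometry whose adjoint powers tend to zero strongly. -/
def IsShiftOp {H : Type*} [NormedAddCommGroup H] [InnerProductSpace ℂ H] [CompleteSpace H]
    (V : H →L[ℂ] H) : Prop :=
  (∀ f, ‖V f‖ = ‖f‖) ∧
    ∀ f, Tendsto (fun m : ℕ => ‖((ContinuousLinearMap.adjoint V) ^ m) f‖) atTop (nhds 0)

/-- The unilateral shift on `ℓ²(ℕ, W)`: `(S f) 0 = 0`, `(S f) (m+1) = f m`. -/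
def IsUnilateralShift {W : Type*} [NormedAddCommGroup W] [InnerProductSpace ℂ W]
    (S : lp (fun _ : ℕ => W) 2 →L[ℂ] lp (fun _ : ℕ => W) 2) : Prop :=
  ∀ f : lp (fun _ : ℕ => W) 2, (S f) 0 = 0 ∧ ∀ m : ℕ, (S f) (m + 1) = f m

/-- The `i`-th coordinate shift on `ℓ²(ℕⁿ, E)`. -/
def IsCoordShift {n : ℕ} {E : Type*} [NormedAddCommGroup E] [InnerProductSpace ℂ E] (i : Fin n)
    (S : lp (fun _ : Fin n → ℕ => E) 2 →L[ℂ] lp (fun _ : Fin n → ℕ => E) 2) : Prop :=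
  ∀ (f : lp (fun _ : Fin n → ℕ => E) 2) (k : Fin n → ℕ),
    (S f) k = if 1 ≤ k i then f (Function.update k i (k i - 1)) else 0

/-- The model space `ℓ²(ℕ, ℓ²(ℕⁿ, E))`, the ℓ²-model of `H²_{H²_E(𝔻ⁿ)}(𝔻)`. -/
abbrev ModelSpace (n : ℕ) (E : Type u) [NormedAddCommGroup E] [InnerProductSpace ℂ E] :=
  lp (fun _ : ℕ => lp (fun _ : Fin n → ℕ => E) 2) 2

/-- `M_{κᵢ}` acts entrywise on `ℓ²(ℕ, ℓ²(ℕⁿ, E))` by the `i`-th coordinate shift. -/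
def IsKappa {n : ℕ} {E : Type*} [NormedAddCommGroup E] [InnerProductSpace ℂ E] (i : Fin n)
    (M : ModelSpace n E →L[ℂ] ModelSpace n E) : Prop :=
  ∀ (f : ModelSpace n E) (m : ℕ) (k : Fin n → ℕ),
    ((M f) m) k = if 1 ≤ k i then (f m) (Function.update k i (k i - 1)) else 0

/-- `P` is the orthogonal projection of `H` onto `W`. -/
def IsOrthProjOnto {H : Type*} [NormedAddCommGroup H] [InnerProductSpace ℂ H]
    (W : Submodule ℂ H) (P : H →L[ℂ] H) : Prop :=
  ∀ f : H, P f ∈ W ∧ f - P f ∈ Wᗮ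

/-- The Hilbert dimension of `E` is at most that of `F`. -/
def HilbertDimLE (E : Type u) (F : Type v) [NormedAddCommGroup E] [InnerProductSpace ℂ E]
    [NormedAddCommGroup F] [InnerProductSpace ℂ F] : Prop :=
  ∀ (ι₁ : Type u) (ι₂ : Type v), HilbertBasis ι₁ ℂ E → HilbertBasis ι₂ ℂ F →
    Cardinal.lift.{v} (Cardinal.mk ι₁) ≤ Cardinal.lift.{u} (Cardinal.mk ι₂)

/-- The Hilbert dimensions of `E` and `F` agree. -/
def HilbertDimEq (E : Type u) (F : Type v) [NormedAddCommGroup E] [InnerProductSpace ℂ E]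
    [NormedAddCommGroup F] [InnerProductSpace ℂ F] : Prop :=
  ∀ (ι₁ : Type u) (ι₂ : Type v), HilbertBasis ι₁ ℂ E → HilbertBasis ι₂ ℂ F →
    Cardinal.lift.{v} (Cardinal.mk ι₁) = Cardinal.lift.{u} (Cardinal.mk ι₂)

/-!
Since `V` is an isometry, the projection onto `W = ker V*` is `1 - V V*`, so
`‖x‖² = ‖P x‖² + ‖V* x‖²`. Telescoping along `V*ᵐ x → 0` gives `∑ ‖P V*ᵐ x‖² = ‖x‖²`, i.e. the
Wold map `x ↦ (P V*ᵐ x)ₘ` is an isometry into `ℓ²(ℕ, W)`; it is onto because `V ^ m w` is sent to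
the `m`-th unit vector `w`. An operator commuting with `V` and `V*` commutes with every `P V*ᵐ`,
which gives both the reducing property and the entrywise action of the `Vᵢ`.
-/

-- With truncated subtraction one of the two exponents on the right is zero.
theorem pow_mul_pow_eq_of_mul_eq_one {M : Type*} [Monoid M] {a b : M} (h : a * b = 1) :
    ∀ k m : ℕ, a ^ k * b ^ m = b ^ (m - k) * a ^ (k - m)
  | 0, m => by simp
  | k + 1, 0 => by simp
  | k + 1, m + 1 => by
    rw [pow_succ, pow_succ', mul_assoc, ← mul_assoc a, h, one_mul,
      pow_mul_pow_eq_of_mul_eq_one h k m, Nat.add_sub_add_right, Nat.add_sub_add_right]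

section lpTwo

variable {𝕜 ι E H : Type*} [NormedField 𝕜] [NormedAddCommGroup E] [NormedSpace 𝕜 E]
  [NormedAddCommGroup H] [NormedSpace 𝕜 H]

private lemma rpow_two_toReal (a : ℝ) : a ^ (2 : ENNReal).toReal = a ^ 2 := by
  norm_num

def lpTwoIsometry (T : ι → H →L[𝕜] E) (hT : ∀ x, HasSum (fun i => ‖T i x‖ ^ 2) (‖x‖ ^ 2)) :
    H →ₗᵢ[𝕜] lp (fun _ : ι => E) 2 where
  toFun x := ⟨fun i => T i x, memℓp_gen <| by simpa only [rpow_two_toReal] using (hT x).summable⟩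
  map_add' x y := lp.ext <| funext fun i => map_add (T i) x y
  map_smul' c x := lp.ext <| funext fun i => map_smul (T i) c x
  norm_map' x := by
    suffices ∀ f : lp (fun _ : ι => E) 2, (∀ i, f i = T i x) → ‖f‖ = ‖x‖ from this _ fun _ => rfl
    intro f hf
    have h := lp.hasSum_norm (p := 2) (by norm_num) f
    simp only [rpow_two_toReal, hf] at h
    exact (sq_eq_sq₀ (norm_nonneg _) (norm_nonneg _)).1 (h.unique (hT x))

theorem LinearIsometry.surjective_of_single_mem_range [DecidableEq ι] [CompleteSpace H]
    (G : H →ₗᵢ[𝕜] lp (fun _ : ι => E) 2) (h : ∀ i e, lp.single 2 i e ∈ Set.range G) :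
    Function.Surjective G := by
  intro g
  refine G.isometry.isClosedEmbedding.isClosed_range.mem_of_tendsto
    (lp.hasSum_single (by norm_num) g) (Eventually.of_forall fun s => ?_)
  exact (LinearMap.range G.toLinearMap).sum_mem fun i _ => h i (g i)

end lpTwo

section Wold

variable {H : Type*} [NormedAddCommGroup H] [InnerProductSpace ℂ H]

theorem IsOrthProjOnto.apply_eq {W : Submodule ℂ H} {P : H →L[ℂ] H} (hP : IsOrthProjOnto W P)
    {x q : H} (hq : q ∈ W) (hxq : x - q ∈ Wᗮ) : P x = q := by
  have hmem : P x - q ∈ W ⊓ Wᗮ :=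
    ⟨W.sub_mem (hP x).1 hq, by simpa using Wᗮ.sub_mem hxq (hP x).2⟩
  rw [W.inf_orthogonal_eq_bot] at hmem
  exact sub_eq_zero.1 hmem

variable [CompleteSpace H] {V P : H →L[ℂ] H} {W : Submodule ℂ H}

theorem IsOrthProjOnto.eq_one_sub_mul_adjoint (hV : ∀ x, ‖V x‖ = ‖x‖)
    (hW : W = LinearMap.ker (adjoint V : H →ₗ[ℂ] H)) (hP : IsOrthProjOnto W P) :
    P = 1 - V * adjoint V := by
  have hAV : adjoint V * V = 1 := V.norm_map_iff_adjoint_comp_self.1 hV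
  subst hW
  ext x
  refine hP.apply_eq ?_ ?_
  · change adjoint V (x - V (adjoint V x)) = 0
    rw [map_sub, ← mul_apply_eq_comp, hAV, one_apply_eq_self, sub_self]
  · rw [sub_apply, one_apply_eq_self, mul_apply_eq_comp, sub_sub_cancel, Submodule.mem_orthogonal]
    intro u (hu : adjoint V u = 0)
    rw [← adjoint_inner_left, hu, inner_zero_left]

theorem IsOrthProjOnto.mul_eq_zero (hV : ∀ x, ‖V x‖ = ‖x‖)
    (hW : W = LinearMap.ker (adjoint V : H →ₗ[ℂ] H)) (hP : IsOrthProjOnto W P) : P * V = 0 := by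
  have hAV : adjoint V * V = 1 := V.norm_map_iff_adjoint_comp_self.1 hV
  rw [hP.eq_one_sub_mul_adjoint hV hW, sub_mul, mul_assoc, hAV, mul_one, one_mul, sub_self]

theorem norm_sq_eq_norm_proj_sq_add_norm_adjoint_sq (hV : ∀ x, ‖V x‖ = ‖x‖)
    (hW : W = LinearMap.ker (adjoint V : H →ₗ[ℂ] H)) (hP : IsOrthProjOnto W P) (x : H) :
    ‖x‖ ^ 2 = ‖P x‖ ^ 2 + ‖adjoint V x‖ ^ 2 := by
  have hdecomp : P x + V (adjoint V x) = x := by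
    rw [hP.eq_one_sub_mul_adjoint hV hW]
    simp
  have horth : inner ℂ (P x) (V (adjoint V x)) = 0 := by
    subst hW
    have hPx : adjoint V (P x) = 0 := (hP x).1
    rw [← adjoint_inner_left, hPx, inner_zero_left]
  calc ‖x‖ ^ 2 = ‖P x + V (adjoint V x)‖ ^ 2 := by rw [hdecomp]
    _ = ‖P x‖ ^ 2 + ‖V (adjoint V x)‖ ^ 2 := by
      simp only [sq, norm_add_sq_eq_norm_sq_add_norm_sq_of_inner_eq_zero _ _ horth]
    _ = ‖P x‖ ^ 2 + ‖adjoint V x‖ ^ 2 := by rw [hV]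

theorem hasSum_norm_proj_adjoint_pow_sq (hV : ∀ x, ‖V x‖ = ‖x‖)
    (hlim : ∀ x, Tendsto (fun m : ℕ => ‖(adjoint V ^ m) x‖) atTop (𝓝 0))
    (hW : W = LinearMap.ker (adjoint V : H →ₗ[ℂ] H)) (hP : IsOrthProjOnto W P) (x : H) :
    HasSum (fun m => ‖P ((adjoint V ^ m) x)‖ ^ 2) (‖x‖ ^ 2) := by
  have hpartial (N : ℕ) : ∑ m ∈ Finset.range N, ‖P ((adjoint V ^ m) x)‖ ^ 2 =
      ‖x‖ ^ 2 - ‖(adjoint V ^ N) x‖ ^ 2 := by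
    induction N with
    | zero => simp
    | succ N ih =>
      have := norm_sq_eq_norm_proj_sq_add_norm_adjoint_sq hV hW hP ((adjoint V ^ N) x)
      rw [Finset.sum_range_succ, ih, pow_succ' (adjoint V), mul_apply_eq_comp]
      linarith
  rw [hasSum_iff_tendsto_nat_of_nonneg (fun _ => sq_nonneg _), funext hpartial]
  simpa using tendsto_const_nhds.sub ((hlim x).pow 2)

def woldMap (hV : ∀ x, ‖V x‖ = ‖x‖)
    (hlim : ∀ x, Tendsto (fun m : ℕ => ‖(adjoint V ^ m) x‖) atTop (𝓝 0))
    (hW : W = LinearMap.ker (adjoint V : H →ₗ[ℂ] H)) (hP : IsOrthProjOnto W P) :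
    H →ₗᵢ[ℂ] lp (fun _ : ℕ => W) 2 :=
  lpTwoIsometry (fun m => P.codRestrict W (fun x => (hP x).1) ∘L adjoint V ^ m)
    (hasSum_norm_proj_adjoint_pow_sq hV hlim hW hP)

theorem apply_mem_of_commute_adjoint (hW : W = LinearMap.ker (adjoint V : H →ₗ[ℂ] H))
    {T : H →L[ℂ] H} (hT : Commute (adjoint V) T) {x : H} (hx : x ∈ W) : T x ∈ W := by
  subst hW
  change adjoint V (T x) = 0
  rw [← mul_apply_eq_comp, hT.eq, mul_apply_eq_comp, show adjoint V x = 0 from hx, map_zero]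

variable (hV : ∀ x, ‖V x‖ = ‖x‖)
  (hlim : ∀ x, Tendsto (fun m : ℕ => ‖(adjoint V ^ m) x‖) atTop (𝓝 0))
  (hW : W = LinearMap.ker (adjoint V : H →ₗ[ℂ] H)) (hP : IsOrthProjOnto W P)

theorem woldMap_apply_coe (x : H) (m : ℕ) :
    (woldMap hV hlim hW hP x m : H) = P ((adjoint V ^ m) x) :=
  rfl

theorem woldMap_pow_apply (m : ℕ) (w : W) :
    woldMap hV hlim hW hP ((V ^ m) w) = lp.single 2 m w := by
  have hAV : adjoint V * V = 1 := V.norm_map_iff_adjoint_comp_self.1 hV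
  have hAw : adjoint V w = 0 := by
    subst hW
    exact w.2
  refine lp.ext (funext fun k => Subtype.ext ?_)
  rw [woldMap_apply_coe, ← mul_apply_eq_comp (adjoint V ^ k), pow_mul_pow_eq_of_mul_eq_one hAV]
  rcases lt_trichotomy k m with hkm | rfl | hmk
  · obtain ⟨j, hj⟩ : ∃ j, m - k = j + 1 := ⟨m - k - 1, by omega⟩
    rw [lp.single_apply_ne _ _ _ hkm.ne, Nat.sub_eq_zero_of_le hkm.le, hj, pow_zero, mul_one,
      pow_succ', mul_apply_eq_comp, ← mul_apply_eq_comp P, hP.mul_eq_zero hV hW, zero_apply,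
      ZeroMemClass.coe_zero]
  · simp [hP.eq_one_sub_mul_adjoint hV hW, hAw]
  · obtain ⟨j, hj⟩ : ∃ j, k - m = j + 1 := ⟨k - m - 1, by omega⟩
    rw [lp.single_apply_ne _ _ _ hmk.ne', Nat.sub_eq_zero_of_le hmk.le, hj, pow_zero, one_mul,
      pow_succ, mul_apply_eq_comp, hAw, map_zero, map_zero, ZeroMemClass.coe_zero]

theorem woldMap_surjective : Function.Surjective (woldMap hV hlim hW hP) :=
  (woldMap hV hlim hW hP).surjective_of_single_mem_range fun m w =>
    ⟨_, woldMap_pow_apply hV hlim hW hP m w⟩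

theorem woldMap_apply_eq_shift {S : lp (fun _ : ℕ => W) 2 →L[ℂ] lp (fun _ : ℕ => W) 2}
    (hS : IsUnilateralShift S) (f : H) :
    woldMap hV hlim hW hP (V f) = S (woldMap hV hlim hW hP f) := by
  have hAV : adjoint V * V = 1 := V.norm_map_iff_adjoint_comp_self.1 hV
  refine lp.ext (funext fun m => Subtype.ext ?_)
  cases m with
  | zero =>
    rw [(hS _).1, woldMap_apply_coe, pow_zero, one_apply_eq_self, ← mul_apply_eq_comp,
      hP.mul_eq_zero hV hW]
    rfl
  | succ m =>
    rw [(hS _).2, woldMap_apply_coe, woldMap_apply_coe, pow_succ, mul_apply_eq_comp,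
      ← mul_apply_eq_comp (adjoint V), hAV, one_apply_eq_self]

theorem woldMap_apply_of_commute {T : H →L[ℂ] H} (hVT : Commute V T)
    (hAT : Commute (adjoint V) T) (f : H) (m : ℕ) :
    (woldMap hV hlim hW hP (T f) m : H) = T (woldMap hV hlim hW hP f m) := by
  have hPT : Commute (P * adjoint V ^ m) T := by
    rw [hP.eq_one_sub_mul_adjoint hV hW]
    exact ((Commute.one_left T).sub_left (hVT.mul_left hAT)).mul_left (hAT.pow_left m)
  rw [woldMap_apply_coe, woldMap_apply_coe]
  exact DFunLike.congr_fun hPT.eq f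

end Wold

theorem statement7_general (n : ℕ)
    {H : Type u} [NormedAddCommGroup H] [InnerProductSpace ℂ H] [CompleteSpace H]
    (V : H →L[ℂ] H) (Vs : Fin n → (H →L[ℂ] H))
    (hV : IsShiftOp V)
    (hcomm : ∀ i, V ∘L Vs i = Vs i ∘L V)
    (hdc : ∀ i, ContinuousLinearMap.adjoint V ∘L Vs i = Vs i ∘L ContinuousLinearMap.adjoint V)
    (W : Submodule ℂ H) (hW : W = LinearMap.ker (ContinuousLinearMap.adjoint V : H →ₗ[ℂ] H))
    (P : H →L[ℂ] H) (hP : IsOrthProjOnto W P)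
    (SW : lp (fun _ : ℕ => ↥W) 2 →L[ℂ] lp (fun _ : ℕ => ↥W) 2)
    (hSW : IsUnilateralShift SW) :
    (∀ i, (∀ x ∈ W, Vs i x ∈ W) ∧ ∀ x ∈ W, ContinuousLinearMap.adjoint (Vs i) x ∈ W) ∧
    ∃ Γ : H ≃ₗᵢ[ℂ] lp (fun _ : ℕ => ↥W) 2,
      (∀ (f : H) (m : ℕ), ((Γ f) m : H) = P (((ContinuousLinearMap.adjoint V) ^ m) f)) ∧
      (∀ f, Γ (V f) = SW (Γ f)) ∧
      (∀ (i : Fin n) (g : lp (fun _ : ℕ => ↥W) 2) (m : ℕ),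
        ((Γ (Vs i (Γ.symm g))) m : H) = Vs i ((g m : H))) := by
  have hVT (i : Fin n) : Commute V (Vs i) := hcomm i
  have hAT (i : Fin n) : Commute (adjoint V) (Vs i) := hdc i
  let Γ := LinearIsometryEquiv.ofSurjective _ (woldMap_surjective hV.1 hV.2 hW hP)
  refine ⟨fun i => ⟨fun _ => apply_mem_of_commute_adjoint hW (hAT i),
      fun _ => apply_mem_of_commute_adjoint hW (hVT i).star_star⟩,
    Γ, woldMap_apply_coe hV.1 hV.2 hW hP, woldMap_apply_eq_shift hV.1 hV.2 hW hP hSW,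
    fun i g m => ?_⟩
  obtain ⟨f, rfl⟩ := Γ.surjective g
  rw [Γ.symm_apply_apply]
  exact woldMap_apply_of_commute hV.1 hV.2 hW hP (hVT i) (hAT i) f m

/-- If `(V, V₁, …, Vₙ)` is a doubly commuting tuple of shifts on `H` and
`W = ker V*`, then (a) `W` reduces every `Vᵢ`, and (b) the Wold–von Neumann unitary
`Γ : H → ℓ²(ℕ, W)`, `(Γ f)(m) = P_W V*ᵐ f`, satisfies `Γ V Γ* = S_W` and each `Γ Vᵢ Γ*` acts
entrywise by `Vᵢ|_W`. -/
theorem statement7 (n : ℕ) (hn : 1 ≤ n)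
    {H : Type u} [NormedAddCommGroup H] [InnerProductSpace ℂ H] [CompleteSpace H]
    (V : H →L[ℂ] H) (Vs : Fin n → (H →L[ℂ] H))
    (hV : IsShiftOp V) (hVs : ∀ i, IsShiftOp (Vs i))
    (hcomm : ∀ i, V ∘L Vs i = Vs i ∘L V)
    (hcomm' : ∀ i j, Vs i ∘L Vs j = Vs j ∘L Vs i)
    (hdc : ∀ i, ContinuousLinearMap.adjoint V ∘L Vs i = Vs i ∘L ContinuousLinearMap.adjoint V)
    (hdc' : ∀ i j, i ≠ j →
      ContinuousLinearMap.adjoint (Vs i) ∘L Vs j = Vs j ∘L ContinuousLinearMap.adjoint (Vs i))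
    (W : Submodule ℂ H) (hW : W = LinearMap.ker (ContinuousLinearMap.adjoint V : H →ₗ[ℂ] H))
    (P : H →L[ℂ] H) (hP : IsOrthProjOnto W P)
    (SW : lp (fun _ : ℕ => ↥W) 2 →L[ℂ] lp (fun _ : ℕ => ↥W) 2)
    (hSW : IsUnilateralShift SW) :
    (∀ i, (∀ x ∈ W, Vs i x ∈ W) ∧ ∀ x ∈ W, ContinuousLinearMap.adjoint (Vs i) x ∈ W) ∧
    ∃ Γ : H ≃ₗᵢ[ℂ] lp (fun _ : ℕ => ↥W) 2,
      (∀ (f : H) (m : ℕ), ((Γ f) m : H) = P (((ContinuousLinearMap.adjoint V) ^ m) f)) ∧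
      (∀ f, Γ (V f) = SW (Γ f)) ∧
      (∀ (i : Fin n) (g : lp (fun _ : ℕ => ↥W) 2) (m : ℕ),
        ((Γ (Vs i (Γ.symm g))) m : H) = Vs i ((g m : H))) :=
  statement7_general n V Vs hV hcomm hdc W hW P hP SW hSW
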